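/- Let D be a finite database, D' = D \ D_k obtained by deleting the set D_k with |D_k| = ε·|D|, 0 < ε < 1. Then inc-deg(D,Σ) ≤ (1/(1-ε)) · inc-deg(D',Σ) + ε. Moreover, if for every consistent Y ⊆ D' the set Y ∪ D_k is consistent (i.e., no tuple in D_k participates in any constraint violation in D), then inc-deg(D,Σ) ≤ (1/(1-ε)) · inc-deg(D',Σ). -/

import Mathlib

/-- deleting D_k with |D_k| = ε·|D|:
inc-deg(D) ≤ (1/(1-ε))·inc-deg(D') + ε, and without the last term if the
deleted tuples do not participate in violations. -/
theorem stmt_6 {α : Type*} [DecidableEq α] (D Dk : Finset α) (cons : Finset α → Prop)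
    (hdc : ∀ X Y : Finset α, X ⊆ Y → cons Y → cons X) (hempty : cons ∅)
    (hD : 0 < D.card) (hk : Dk ⊆ D)
    (ε : ℚ) (hε0 : 0 < ε) (hε1 : ε < 1)
    (hcard : (Dk.card : ℚ) = ε * D.card)
    (nD : ℕ)
    (hnD : ∃ Y ⊆ D, cons Y ∧ (D \ Y).card = nD)
    (hnDmin : ∀ Y ⊆ D, cons Y → nD ≤ (D \ Y).card)
    (nD' : ℕ)
    (hnD' : ∃ Y ⊆ D \ Dk, cons Y ∧ ((D \ Dk) \ Y).card = nD')
    (hnD'min : ∀ Y ⊆ D \ Dk, cons Y → nD' ≤ ((D \ Dk) \ Y).card) :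
    (nD : ℚ) / D.card ≤ (1 / (1 - ε)) * ((nD' : ℚ) / (D \ Dk).card) + ε ∧
    ((∀ Y ⊆ D \ Dk, cons Y → cons (Y ∪ Dk)) →
      (nD : ℚ) / D.card ≤ (1 / (1 - ε)) * ((nD' : ℚ) / (D \ Dk).card)) := by
  obtain ⟨Y, hY, hYc, hYn⟩ := hnD'
  have hYD : Y ⊆ D := hY.trans Finset.sdiff_subset
  have hDkDY : Dk ⊆ D \ Y := by
    intro x hx
    simp only [Finset.mem_sdiff]
    exact ⟨hk hx, fun hxY => (Finset.mem_sdiff.mp (hY hxY)).2 hx⟩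
  have hswap : (D \ Dk) \ Y = (D \ Y) \ Dk := by
    ext x; simp only [Finset.mem_sdiff]; tauto
  have hcs := Finset.card_sdiff_of_subset hDkDY
  have hle2 := Finset.card_le_card hDkDY
  rw [← hswap, hYn] at hcs
  have hcardDY : (D \ Y).card = nD' + Dk.card := by omega
  have hle : nD ≤ nD' + Dk.card := by
    have := hnDmin Y hYD hYc
    omega
  have hkn : Dk.card ≤ D.card := Finset.card_le_card hk
  have hnpos : (0:ℚ) < D.card := by exact_mod_cast hD
  have h1ε : (0:ℚ) < 1 - ε := by linarith
  have hD'q : ((D \ Dk).card : ℚ) = (1 - ε) * D.card := by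
    rw [Finset.card_sdiff_of_subset hk]
    push_cast [hkn]
    linarith [hcard]
  have hnD'0 : (0:ℚ) ≤ (nD':ℚ) := Nat.cast_nonneg _
  have hmain : (nD':ℚ)/D.card ≤ (1/(1-ε)) * ((nD':ℚ)/(D \ Dk).card) := by
    rw [hD'q]
    rw [div_mul_div_comm, one_mul]
    apply div_le_div_of_nonneg_left hnD'0 (mul_pos h1ε (mul_pos h1ε hnpos))
    nlinarith
  constructor
  · have h1 : (nD:ℚ)/D.card ≤ (nD':ℚ)/D.card + ε := by
      rw [div_add' _ _ _ (ne_of_gt hnpos)]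
      refine div_le_div_of_nonneg_right ?_ hnpos.le
      have : (nD:ℚ) ≤ (nD':ℚ) + Dk.card := by exact_mod_cast hle
      linarith [hcard]
    linarith
  · intro hcl
    have hcons : cons (Y ∪ Dk) := hcl Y hY hYc
    have hsub : Y ∪ Dk ⊆ D := Finset.union_subset hYD hk
    have hsd : D \ (Y ∪ Dk) = (D \ Dk) \ Y := by
      ext x; simp only [Finset.mem_sdiff, Finset.mem_union]; tauto
    have hle' : nD ≤ nD' := by
      have := hnDmin _ hsub hcons
      rw [hsd, hYn] at this
      exact this
    calc (nD:ℚ)/D.card ≤ (nD':ℚ)/D.card := by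
          exact div_le_div_of_nonneg_right (by exact_mod_cast hle') hnpos.le
      _ ≤ _ := hmain
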